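/- If det(Z_1) ≠ 0, then the two-point boundary value problem (MFG TPBV) has exactly one solution (X̄, s) on [0, T]. -/

import Mathlib

/-!
Writing `y = (X̄, s)`, the TPBV problem is the linear system `y' = 𝔸(t) y + (0, Q η)` with split
boundary conditions. The matrix `Φ(t,0)` is invertible for every `t` (a vector it kills at some
time would give a solution vanishing there, hence everywhere by uniqueness), so variation of
constants yields a particular solution `y₀` with `y₀(0) = 0`, and by uniqueness every solution is
`y(t) = Φ(t,0) y(0) + y₀(t)`. The initial condition fixes the `X̄`-part of `y(0)` to `x₀`, and the
terminal condition becomes a linear equation `Z₁ s(0) = r`, which has exactly one solution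
because `det Z₁ ≠ 0`.
-/

open Matrix

/-- `M = B R⁻¹ Bᵀ`. -/
noncomputable def Mmat (n n1 : ℕ) (B : Matrix (Fin n) (Fin n1) ℝ)
    (R : Matrix (Fin n1) (Fin n1) ℝ) : Matrix (Fin n) (Fin n) ℝ :=
  B * R⁻¹ * Bᵀ

/-- The `2n × 2n` coefficient matrix `𝔸(t)` of the TPBV problem, where `L1 = Λ₁(t)`. -/
noncomputable def bbA (n n1 : ℕ) (A G Q Γ : Matrix (Fin n) (Fin n) ℝ)
    (B : Matrix (Fin n) (Fin n1) ℝ) (R : Matrix (Fin n1) (Fin n1) ℝ)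
    (L1 : Matrix (Fin n) (Fin n) ℝ) :
    Matrix (Fin n ⊕ Fin n) (Fin n ⊕ Fin n) ℝ :=
  Matrix.fromBlocks (A - Mmat n n1 B R * L1 + G) (-(Mmat n n1 B R))
    (Q * Γ - L1 * G) (-Aᵀ + L1 * Mmat n n1 B R)

/-- `Λ₁` solves the symmetric Riccati TVP on `[0,T]`. -/
def IsLam1Sol (n n1 : ℕ) (A Q Qf : Matrix (Fin n) (Fin n) ℝ)
    (B : Matrix (Fin n) (Fin n1) ℝ) (R : Matrix (Fin n1) (Fin n1) ℝ) (T : ℝ)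
    (Λ1 : ℝ → Matrix (Fin n) (Fin n) ℝ) : Prop :=
  (∀ t ∈ Set.Icc (0:ℝ) T, ∀ r c,
    HasDerivWithinAt (fun s => Λ1 s r c)
      ((Λ1 t * Mmat n n1 B R * Λ1 t - (Λ1 t * A + Aᵀ * Λ1 t) - Q) r c)
      (Set.Icc (0:ℝ) T) t)
  ∧ Λ1 T = Qf

/-- `Φ(t,τ)` is the fundamental solution matrix of `∂Φ/∂t = 𝔸(t) Φ`, `Φ(τ,τ) = I`,
for `t, τ ∈ [0,T]`. -/
def IsFundSol (n n1 : ℕ) (A G Q Γ : Matrix (Fin n) (Fin n) ℝ)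
    (B : Matrix (Fin n) (Fin n1) ℝ) (R : Matrix (Fin n1) (Fin n1) ℝ) (T : ℝ)
    (Λ1 : ℝ → Matrix (Fin n) (Fin n) ℝ)
    (Φ : ℝ → ℝ → Matrix (Fin n ⊕ Fin n) (Fin n ⊕ Fin n) ℝ) : Prop :=
  ∀ τ ∈ Set.Icc (0:ℝ) T, Φ τ τ = 1 ∧
    ∀ t ∈ Set.Icc (0:ℝ) T, ∀ p q,
      HasDerivWithinAt (fun s => Φ s τ p q)
        ((bbA n n1 A G Q Γ B R (Λ1 t) * Φ t τ) p q) (Set.Icc (0:ℝ) T) t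

/-- `Z₁ = Φ₂₂(T,0) + Q_f Γ_f Φ₁₂(T,0)`. -/
noncomputable def Z1mat (n : ℕ) (Qf Γf : Matrix (Fin n) (Fin n) ℝ) (T : ℝ)
    (Φ : ℝ → ℝ → Matrix (Fin n ⊕ Fin n) (Fin n ⊕ Fin n) ℝ) :
    Matrix (Fin n) (Fin n) ℝ :=
  (Φ T 0).toBlocks₂₂ + Qf * Γf * (Φ T 0).toBlocks₁₂

/-- `Z₂ = [Φ₂₁(T,0) + Q_f Γ_f Φ₁₁(T,0)] x₀ + Q_f η_f
      + ∫₀ᵀ [Φ₂₂(T,τ) + Q_f Γ_f Φ₁₂(T,τ)] Q η dτ`. -/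
noncomputable def Z2vec (n : ℕ) (Q Qf Γf : Matrix (Fin n) (Fin n) ℝ)
    (η ηf x0 : Fin n → ℝ) (T : ℝ)
    (Φ : ℝ → ℝ → Matrix (Fin n ⊕ Fin n) (Fin n ⊕ Fin n) ℝ)
    (j : Fin n) : ℝ :=
  (((Φ T 0).toBlocks₂₁ + Qf * Γf * (Φ T 0).toBlocks₁₁) *ᵥ x0) j
    + (Qf *ᵥ ηf) j
    + ∫ τ in (0:ℝ)..T,
        ((((Φ T τ).toBlocks₂₂ + Qf * Γf * (Φ T τ).toBlocks₁₂) *ᵥ (Q *ᵥ η)) j)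

/-- `(X̄, s)` solves the MFG TPBV problem on `[0,T]`. -/
def IsTPBVSol (n n1 : ℕ) (A G Q Qf Γ Γf : Matrix (Fin n) (Fin n) ℝ)
    (B : Matrix (Fin n) (Fin n1) ℝ) (R : Matrix (Fin n1) (Fin n1) ℝ)
    (η ηf x0 : Fin n → ℝ) (T : ℝ)
    (Λ1 : ℝ → Matrix (Fin n) (Fin n) ℝ) (X s : ℝ → Fin n → ℝ) : Prop :=
  (∀ t ∈ Set.Icc (0:ℝ) T, ∀ j,
    HasDerivWithinAt (fun u => X u j)
      (((A - Mmat n n1 B R * Λ1 t + G) *ᵥ X t - Mmat n n1 B R *ᵥ s t) j)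
      (Set.Icc (0:ℝ) T) t)
  ∧ (∀ t ∈ Set.Icc (0:ℝ) T, ∀ j,
    HasDerivWithinAt (fun u => s u j)
      ((-((Aᵀ - Λ1 t * Mmat n n1 B R) *ᵥ s t) - (Λ1 t * G) *ᵥ X t
        + Q *ᵥ (Γ *ᵥ X t + η)) j)
      (Set.Icc (0:ℝ) T) t)
  ∧ X 0 = x0
  ∧ s T = -(Qf *ᵥ (Γf *ᵥ X T + ηf))

open Set

section LinearODE

theorem eqOn_Icc_of_hasDerivWithinAt_of_lipschitzWith {E : Type*} [NormedAddCommGroup E]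
    [NormedSpace ℝ E] {v : ℝ → E → E} {K : NNReal} {f g : ℝ → E} {a b t₀ : ℝ}
    (hv : ∀ t ∈ Icc a b, LipschitzWith K (v t))
    (hf : ∀ t ∈ Icc a b, HasDerivWithinAt f (v t (f t)) (Icc a b) t)
    (hg : ∀ t ∈ Icc a b, HasDerivWithinAt g (v t (g t)) (Icc a b) t)
    (ht₀ : t₀ ∈ Icc a b) (heq : f t₀ = g t₀) : EqOn f g (Icc a b) := by
  have hfc : ContinuousOn f (Icc a b) := fun t ht => (hf t ht).continuousWithinAt
  have hgc : ContinuousOn g (Icc a b) := fun t ht => (hg t ht).continuousWithinAt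
  rw [← Icc_union_Icc_eq_Icc ht₀.1 ht₀.2]
  refine EqOn.union ?_ ?_
  · have hsub : Ioc a t₀ ⊆ Ioc a b := Ioc_subset_Ioc_right ht₀.2
    have hder : ∀ {h : ℝ → E}, (∀ t ∈ Icc a b, HasDerivWithinAt h (v t (h t)) (Icc a b) t) →
        ∀ t ∈ Ioc a t₀, HasDerivWithinAt h (v t (h t)) (Iic t) t := fun hh t ht =>
      (hh t (Ioc_subset_Icc_self (hsub ht))).mono_of_mem_nhdsWithin
        (Icc_mem_nhdsLE_of_mem (hsub ht))
    exact ODE_solution_unique_of_mem_Icc_left (s := fun _ => univ)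
      (fun t ht => (hv t (Ioc_subset_Icc_self (hsub ht))).lipschitzOnWith)
      (hfc.mono (Icc_subset_Icc_right ht₀.2)) (hder hf) (fun _ _ => trivial)
      (hgc.mono (Icc_subset_Icc_right ht₀.2)) (hder hg) (fun _ _ => trivial) heq
  · have hsub : Ico t₀ b ⊆ Ico a b := Ico_subset_Ico_left ht₀.1
    have hder : ∀ {h : ℝ → E}, (∀ t ∈ Icc a b, HasDerivWithinAt h (v t (h t)) (Icc a b) t) →
        ∀ t ∈ Ico t₀ b, HasDerivWithinAt h (v t (h t)) (Ici t) t := fun hh t ht =>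
      (hh t (Ico_subset_Icc_self (hsub ht))).mono_of_mem_nhdsWithin
        (Icc_mem_nhdsGE_of_mem (hsub ht))
    exact ODE_solution_unique_of_mem_Icc_right (s := fun _ => univ)
      (fun t ht => (hv t (Ico_subset_Icc_self (hsub ht))).lipschitzOnWith)
      (hfc.mono (Icc_subset_Icc_left ht₀.1)) (hder hf) (fun _ _ => trivial)
      (hgc.mono (Icc_subset_Icc_left ht₀.1)) (hder hg) (fun _ _ => trivial) heq

theorem continuousOn_of_differentiableWithinAt_apply {ι κ : Type*} {N : ℝ → Matrix ι κ ℝ}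
    {s : Set ℝ} (hN : ∀ t ∈ s, ∀ i j, DifferentiableWithinAt ℝ (fun u => N u i j) s t) :
    ContinuousOn N s :=
  continuousOn_pi.2 fun i => continuousOn_pi.2 fun j t ht => (hN t ht i j).continuousWithinAt

theorem hasDerivWithinAt_integral_Icc {E : Type*} [NormedAddCommGroup E] [NormedSpace ℝ E]
    [CompleteSpace E] {g : ℝ → E} {a b t : ℝ} (hg : ContinuousOn g (Icc a b))
    (ht : t ∈ Icc a b) : HasDerivWithinAt (fun u => ∫ τ in a..u, g τ) (g t) (Icc a b) t := by
  have : Fact (t ∈ Icc a b) := ⟨ht⟩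
  exact intervalIntegral.integral_hasDerivWithinAt_right
    ((hg.mono (uIcc_subset_Icc (left_mem_Icc.2 (ht.1.trans ht.2)) ht)).intervalIntegrable)
    (hg.stronglyMeasurableAtFilter_nhdsWithin measurableSet_Icc t) (hg t ht)

variable {m : Type*} [Fintype m] {a b : ℝ}

theorem hasDerivWithinAt_matrix_mulVec {Ψ : ℝ → Matrix m m ℝ} {Ψ' : Matrix m m ℝ}
    {c : ℝ → m → ℝ} {c' : m → ℝ} {s : Set ℝ} {t : ℝ}
    (hΨ : ∀ i j, HasDerivWithinAt (fun u => Ψ u i j) (Ψ' i j) s t)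
    (hc : HasDerivWithinAt c c' s t) :
    HasDerivWithinAt (fun u => Ψ u *ᵥ c u) (Ψ' *ᵥ c t + Ψ t *ᵥ c') s t := by
  refine hasDerivWithinAt_pi.2 fun i => ?_
  simp only [Pi.add_apply, mulVec, dotProduct, ← Finset.sum_add_distrib]
  exact HasDerivWithinAt.fun_sum fun j _ => (hΨ i j).mul (hasDerivWithinAt_pi.1 hc j)

attribute [local instance] Matrix.linftyOpNormedAddCommGroup in
theorem eqOn_Icc_of_hasDerivWithinAt_mulVec_add {M : ℝ → Matrix m m ℝ} {f x y : ℝ → m → ℝ}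
    {t₀ : ℝ} (hM : ContinuousOn M (Icc a b))
    (hx : ∀ t ∈ Icc a b, HasDerivWithinAt x (M t *ᵥ x t + f t) (Icc a b) t)
    (hy : ∀ t ∈ Icc a b, HasDerivWithinAt y (M t *ᵥ y t + f t) (Icc a b) t)
    (ht₀ : t₀ ∈ Icc a b) (heq : x t₀ = y t₀) : EqOn x y (Icc a b) := by
  obtain ⟨C, hC⟩ := isCompact_Icc.exists_bound_of_continuousOn hM
  refine eqOn_Icc_of_hasDerivWithinAt_of_lipschitzWith (v := fun t z => M t *ᵥ z + f t)
    (K := C.toNNReal) (fun t ht => LipschitzWith.of_dist_le_mul fun z w => ?_) hx hy ht₀ heq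
  rw [dist_eq_norm, dist_eq_norm, add_sub_add_right_eq_sub, ← mulVec_sub]
  exact (linfty_opNorm_mulVec _ _).trans
    (mul_le_mul_of_nonneg_right ((hC t ht).trans (Real.le_coe_toNNReal C)) (norm_nonneg _))

theorem det_ne_zero_of_hasDerivWithinAt_mul [DecidableEq m] {M Ψ : ℝ → Matrix m m ℝ} {t₀ t : ℝ}
    (hM : ContinuousOn M (Icc a b))
    (hΨ : ∀ t ∈ Icc a b, ∀ i j,
      HasDerivWithinAt (fun u => Ψ u i j) ((M t * Ψ t) i j) (Icc a b) t)
    (ht₀ : t₀ ∈ Icc a b) (hΨ₀ : Ψ t₀ = 1) (ht : t ∈ Icc a b) : (Ψ t).det ≠ 0 := by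
  intro hdet
  obtain ⟨v, hv, hΨv⟩ := exists_mulVec_eq_zero_iff.2 hdet
  have hsol : ∀ u ∈ Icc a b,
      HasDerivWithinAt (fun u => Ψ u *ᵥ v) (M u *ᵥ (Ψ u *ᵥ v) + 0) (Icc a b) u := fun u hu => by
    simpa [mulVec_mulVec] using
      hasDerivWithinAt_matrix_mulVec (hΨ u hu) (hasDerivWithinAt_const u (Icc a b) v)
  have hzero : ∀ u ∈ Icc a b,
      HasDerivWithinAt (fun _ => (0 : m → ℝ)) (M u *ᵥ 0 + 0) (Icc a b) u := fun u _ => by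
    simpa using hasDerivWithinAt_const _ _ _
  have h := eqOn_Icc_of_hasDerivWithinAt_mulVec_add hM hsol hzero ht hΨv ht₀
  exact hv (by simpa [hΨ₀] using h)

theorem ContinuousOn.matrix_inv [DecidableEq m] {Ψ : ℝ → Matrix m m ℝ} {s : Set ℝ}
    (hΨ : ContinuousOn Ψ s) (hdet : ∀ t ∈ s, (Ψ t).det ≠ 0) :
    ContinuousOn (fun t => (Ψ t)⁻¹) s := fun t ht =>
  (continuousAt_matrix_inv _ (NormedRing.inverse_continuousAt (Units.mk0 _ (hdet t ht)))
    ).comp_continuousWithinAt (hΨ t ht)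

/-- Variation of constants: `y t = Ψ t *ᵥ ∫ τ in a..t, (Ψ τ)⁻¹ *ᵥ f τ`. -/
theorem exists_hasDerivWithinAt_mulVec_add [DecidableEq m] {M Ψ : ℝ → Matrix m m ℝ}
    {f : ℝ → m → ℝ} (hM : ContinuousOn M (Icc a b)) (hf : ContinuousOn f (Icc a b))
    (hΨ : ∀ t ∈ Icc a b, ∀ i j,
      HasDerivWithinAt (fun u => Ψ u i j) ((M t * Ψ t) i j) (Icc a b) t)
    (hΨa : Ψ a = 1) :
    ∃ y : ℝ → m → ℝ, y a = 0 ∧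
      ∀ t ∈ Icc a b, HasDerivWithinAt y (M t *ᵥ y t + f t) (Icc a b) t := by
  refine ⟨fun t => Ψ t *ᵥ ∫ τ in a..t, (Ψ τ)⁻¹ *ᵥ f τ, by simp, fun t ht => ?_⟩
  have hdet : ∀ u ∈ Icc a b, (Ψ u).det ≠ 0 := fun u hu =>
    det_ne_zero_of_hasDerivWithinAt_mul hM hΨ (left_mem_Icc.2 (ht.1.trans ht.2)) hΨa hu
  have hΨc : ContinuousOn Ψ (Icc a b) := continuousOn_of_differentiableWithinAt_apply
    fun u hu i j => (hΨ u hu i j).differentiableWithinAt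
  have hint : ContinuousOn (fun τ => (Ψ τ)⁻¹ *ᵥ f τ) (Icc a b) := fun u hu =>
    (continuous_fst.matrix_mulVec continuous_snd).continuousAt.comp_continuousWithinAt
      ((hΨc.matrix_inv hdet u hu).prodMk (hf u hu))
  refine (hasDerivWithinAt_matrix_mulVec (hΨ t ht)
    (hasDerivWithinAt_integral_Icc hint ht)).congr_deriv ?_
  rw [mulVec_mulVec, mulVec_mulVec, mul_nonsing_inv _ (isUnit_iff_ne_zero.2 (hdet t ht)),
    one_mulVec]

theorem hasDerivWithinAt_mulVec_add_of_hasDerivWithinAt {M Ψ : ℝ → Matrix m m ℝ}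
    {f y : ℝ → m → ℝ}
    (hΨ : ∀ t ∈ Icc a b, ∀ i j,
      HasDerivWithinAt (fun u => Ψ u i j) ((M t * Ψ t) i j) (Icc a b) t)
    (hy : ∀ t ∈ Icc a b, HasDerivWithinAt y (M t *ᵥ y t + f t) (Icc a b) t) (z : m → ℝ) :
    ∀ t ∈ Icc a b, HasDerivWithinAt (fun t => Ψ t *ᵥ z + y t)
      (M t *ᵥ (Ψ t *ᵥ z + y t) + f t) (Icc a b) t := fun t ht => by
  refine ((hasDerivWithinAt_matrix_mulVec (hΨ t ht) (hasDerivWithinAt_const t _ z)).add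
    (hy t ht)).congr_deriv ?_
  rw [mulVec_zero, add_zero, mulVec_add, mulVec_mulVec, add_assoc]

theorem eqOn_Icc_mulVec_add_of_hasDerivWithinAt [DecidableEq m] {M Ψ : ℝ → Matrix m m ℝ}
    {f y₀ y : ℝ → m → ℝ} (hab : a ≤ b) (hM : ContinuousOn M (Icc a b))
    (hΨ : ∀ t ∈ Icc a b, ∀ i j,
      HasDerivWithinAt (fun u => Ψ u i j) ((M t * Ψ t) i j) (Icc a b) t)
    (hΨa : Ψ a = 1)
    (hy₀ : ∀ t ∈ Icc a b, HasDerivWithinAt y₀ (M t *ᵥ y₀ t + f t) (Icc a b) t) (hy₀a : y₀ a = 0)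
    (hy : ∀ t ∈ Icc a b, HasDerivWithinAt y (M t *ᵥ y t + f t) (Icc a b) t) :
    EqOn y (fun t => Ψ t *ᵥ y a + y₀ t) (Icc a b) :=
  eqOn_Icc_of_hasDerivWithinAt_mulVec_add hM hy
    (hasDerivWithinAt_mulVec_add_of_hasDerivWithinAt hΨ hy₀ (y a)) (left_mem_Icc.2 hab)
    (by simp [hΨa, hy₀a])

end LinearODE

section TPBV

variable {n n1 : ℕ} {A G Q Qf Γ Γf : Matrix (Fin n) (Fin n) ℝ} {B : Matrix (Fin n) (Fin n1) ℝ}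
  {R : Matrix (Fin n1) (Fin n1) ℝ} {η ηf x0 : Fin n → ℝ} {T : ℝ}
  {Λ1 : ℝ → Matrix (Fin n) (Fin n) ℝ}

theorem bbA_mulVec_sumElim_add (L : Matrix (Fin n) (Fin n) ℝ) (x s : Fin n → ℝ) :
    bbA n n1 A G Q Γ B R L *ᵥ Sum.elim x s + Sum.elim (0 : Fin n → ℝ) (Q *ᵥ η) =
      Sum.elim ((A - Mmat n n1 B R * L + G) *ᵥ x - Mmat n n1 B R *ᵥ s)
        (-((Aᵀ - L * Mmat n n1 B R) *ᵥ s) - (L * G) *ᵥ x + Q *ᵥ (Γ *ᵥ x + η)) := by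
  rw [bbA, fromBlocks_mulVec, Sum.elim_comp_inl, Sum.elim_comp_inr, ← Sum.elim_add_add]
  congr 1
  · rw [neg_mulVec, add_zero, ← sub_eq_add_neg]
  · simp only [sub_mulVec, add_mulVec, neg_mulVec, mulVec_add, mulVec_mulVec]
    abel

theorem isTPBVSol_iff {X s : ℝ → Fin n → ℝ} :
    IsTPBVSol n n1 A G Q Qf Γ Γf B R η ηf x0 T Λ1 X s ↔
      (∀ t ∈ Icc 0 T, HasDerivWithinAt (fun u => Sum.elim (X u) (s u))
        (bbA n n1 A G Q Γ B R (Λ1 t) *ᵥ Sum.elim (X t) (s t) + Sum.elim (0 : Fin n → ℝ) (Q *ᵥ η))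
        (Icc 0 T) t) ∧
      X 0 = x0 ∧ s T = -(Qf *ᵥ (Γf *ᵥ X T + ηf)) := by
  simp only [IsTPBVSol, bbA_mulVec_sumElim_add, hasDerivWithinAt_pi, Sum.forall, Sum.elim_inl,
    Sum.elim_inr, imp_and, forall_and, and_assoc]

theorem comp_inr_eq_neg_terminal_iff_toBlocks (P : Matrix (Fin n ⊕ Fin n) (Fin n ⊕ Fin n) ℝ)
    (z p : Fin n ⊕ Fin n → ℝ) :
    (P *ᵥ z + p) ∘ Sum.inr = -(Qf *ᵥ (Γf *ᵥ ((P *ᵥ z + p) ∘ Sum.inl) + ηf)) ↔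
      (P.toBlocks₂₂ + Qf * Γf * P.toBlocks₁₂) *ᵥ (z ∘ Sum.inr) =
        -((P.toBlocks₂₁ + Qf * Γf * P.toBlocks₁₁) *ᵥ (z ∘ Sum.inl) + p ∘ Sum.inr
          + Qf *ᵥ (Γf *ᵥ (p ∘ Sum.inl) + ηf)) := by
  rw [eq_neg_iff_add_eq_zero, eq_neg_iff_add_eq_zero, ← fromBlocks_toBlocks P, fromBlocks_mulVec]
  simp only [toBlocks_fromBlocks₁₁, toBlocks_fromBlocks₁₂, toBlocks_fromBlocks₂₁,
    toBlocks_fromBlocks₂₂, Pi.add_comp, Sum.elim_comp_inl, Sum.elim_comp_inr, add_mulVec,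
    mulVec_add, mulVec_mulVec, mul_assoc]
  constructor <;> intro h <;> rw [← h] <;> abel

theorem IsLam1Sol.continuousOn_bbA (hΛ1 : IsLam1Sol n n1 A Q Qf B R T Λ1) :
    ContinuousOn (fun t => bbA n n1 A G Q Γ B R (Λ1 t)) (Icc 0 T) := by
  have hΛ : ContinuousOn Λ1 (Icc 0 T) := continuousOn_of_differentiableWithinAt_apply
    fun t ht i j => (hΛ1.1 t ht i j).differentiableWithinAt
  have hbbA : Continuous (bbA n n1 A G Q Γ B R) := by
    unfold bbA
    fun_prop
  exact hbbA.comp_continuousOn hΛ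

theorem isTPBVSol_iff_exists {Φ : ℝ → ℝ → Matrix (Fin n ⊕ Fin n) (Fin n ⊕ Fin n) ℝ}
    {y₀ : ℝ → Fin n ⊕ Fin n → ℝ} {X s : ℝ → Fin n → ℝ} (hT : 0 ≤ T)
    (h𝔸 : ContinuousOn (fun t => bbA n n1 A G Q Γ B R (Λ1 t)) (Icc 0 T))
    (hΦ : ∀ t ∈ Icc 0 T, ∀ i j, HasDerivWithinAt (fun u => Φ u 0 i j)
      ((bbA n n1 A G Q Γ B R (Λ1 t) * Φ t 0) i j) (Icc 0 T) t)
    (hΦ0 : Φ 0 0 = 1)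
    (hy₀ : ∀ t ∈ Icc 0 T, HasDerivWithinAt y₀
      (bbA n n1 A G Q Γ B R (Λ1 t) *ᵥ y₀ t + Sum.elim (0 : Fin n → ℝ) (Q *ᵥ η)) (Icc 0 T) t)
    (hy₀0 : y₀ 0 = 0) :
    IsTPBVSol n n1 A G Q Qf Γ Γf B R η ηf x0 T Λ1 X s ↔
      ∃ z : Fin n ⊕ Fin n → ℝ, z ∘ Sum.inl = x0 ∧
        Z1mat n Qf Γf T Φ *ᵥ (z ∘ Sum.inr) =
          -(((Φ T 0).toBlocks₂₁ + Qf * Γf * (Φ T 0).toBlocks₁₁) *ᵥ x0 + y₀ T ∘ Sum.inr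
            + Qf *ᵥ (Γf *ᵥ (y₀ T ∘ Sum.inl) + ηf)) ∧
        EqOn (fun t => Sum.elim (X t) (s t)) (fun t => Φ t 0 *ᵥ z + y₀ t) (Icc 0 T) := by
  have hTmem : T ∈ Icc 0 T := right_mem_Icc.2 hT
  rw [isTPBVSol_iff]
  constructor
  · rintro ⟨hode, hX0, hsT⟩
    have hrep := eqOn_Icc_mulVec_add_of_hasDerivWithinAt hT h𝔸 hΦ hΦ0 hy₀ hy₀0 hode
    obtain ⟨hXT, hsT'⟩ := Sum.elim_eq_iff.1 ((hrep hTmem).trans (Sum.elim_comp_inl_inr _).symm)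
    refine ⟨Sum.elim (X 0) (s 0), by rw [Sum.elim_comp_inl, hX0], ?_, hrep⟩
    rw [hXT, hsT', comp_inr_eq_neg_terminal_iff_toBlocks] at hsT
    rwa [Sum.elim_comp_inl, hX0] at hsT
  · rintro ⟨z, hzl, hzr, hrep⟩
    have hcomp : ∀ t ∈ Icc 0 T,
        X t = (Φ t 0 *ᵥ z + y₀ t) ∘ Sum.inl ∧ s t = (Φ t 0 *ᵥ z + y₀ t) ∘ Sum.inr :=
      fun t ht => Sum.elim_eq_iff.1 ((hrep ht).trans (Sum.elim_comp_inl_inr _).symm)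
    obtain ⟨hXT, hsT⟩ := hcomp T hTmem
    refine ⟨fun t ht => ?_, ?_, ?_⟩
    · have hrept : Sum.elim (X t) (s t) = Φ t 0 *ᵥ z + y₀ t := hrep ht
      rw [hrept]
      exact (hasDerivWithinAt_mulVec_add_of_hasDerivWithinAt hΦ hy₀ z t ht).congr
        (fun u hu => hrep hu) hrept
    · rw [(hcomp 0 (left_mem_Icc.2 hT)).1, hΦ0, hy₀0, one_mulVec, add_zero, hzl]
    · rw [hXT, hsT, comp_inr_eq_neg_terminal_iff_toBlocks, hzl]
      exact hzr

end TPBV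

theorem tpbv_unique_solution_of_det_Z1_ne_zero_general
    (n n1 : ℕ) (T : ℝ) (hT : 0 < T)
    (A G Q Qf Γ Γf : Matrix (Fin n) (Fin n) ℝ)
    (B : Matrix (Fin n) (Fin n1) ℝ) (R : Matrix (Fin n1) (Fin n1) ℝ)
    (η ηf x0 : Fin n → ℝ)
    (Λ1 : ℝ → Matrix (Fin n) (Fin n) ℝ)
    (hΛ1 : IsLam1Sol n n1 A Q Qf B R T Λ1)
    (Φ : ℝ → ℝ → Matrix (Fin n ⊕ Fin n) (Fin n ⊕ Fin n) ℝ)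
    (hΦ : IsFundSol n n1 A G Q Γ B R T Λ1 Φ)
    (hdet : (Z1mat n Qf Γf T Φ).det ≠ 0) :
    ∃ X s : ℝ → Fin n → ℝ,
      IsTPBVSol n n1 A G Q Qf Γ Γf B R η ηf x0 T Λ1 X s ∧
      ∀ X' s' : ℝ → Fin n → ℝ,
        IsTPBVSol n n1 A G Q Qf Γ Γf B R η ηf x0 T Λ1 X' s' →
        ∀ t ∈ Set.Icc (0:ℝ) T, X' t = X t ∧ s' t = s t := by
  obtain ⟨hΦ0, hΦ'⟩ := hΦ 0 (left_mem_Icc.2 hT.le)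
  have h𝔸 := hΛ1.continuousOn_bbA (G := G) (Γ := Γ)
  obtain ⟨y₀, hy₀0, hy₀⟩ := exists_hasDerivWithinAt_mulVec_add
    (f := fun _ => Sum.elim (0 : Fin n → ℝ) (Q *ᵥ η)) h𝔸 continuousOn_const hΦ' hΦ0
  have hZ1 : IsUnit (Z1mat n Qf Γf T Φ).det := hdet.isUnit
  set r := -(((Φ T 0).toBlocks₂₁ + Qf * Γf * (Φ T 0).toBlocks₁₁) *ᵥ x0 + y₀ T ∘ Sum.inr
    + Qf *ᵥ (Γf *ᵥ (y₀ T ∘ Sum.inl) + ηf))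
  set z : Fin n ⊕ Fin n → ℝ := Sum.elim x0 ((Z1mat n Qf Γf T Φ)⁻¹ *ᵥ r)
  have hzr : Z1mat n Qf Γf T Φ *ᵥ (z ∘ Sum.inr) = r := by
    rw [Sum.elim_comp_inr, mulVec_mulVec, mul_nonsing_inv _ hZ1, one_mulVec]
  refine ⟨fun t => (Φ t 0 *ᵥ z + y₀ t) ∘ Sum.inl, fun t => (Φ t 0 *ᵥ z + y₀ t) ∘ Sum.inr,
    (isTPBVSol_iff_exists hT.le h𝔸 hΦ' hΦ0 hy₀ hy₀0).2
      ⟨z, Sum.elim_comp_inl _ _, hzr, fun t _ => Sum.elim_comp_inl_inr _⟩,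
    fun X' s' h t ht => ?_⟩
  obtain ⟨z', hz'l, hz'r, hrep⟩ := (isTPBVSol_iff_exists hT.le h𝔸 hΦ' hΦ0 hy₀ hy₀0).1 h
  have hz' : z' = z := by
    rw [← Sum.elim_comp_inl_inr z', hz'l,
      mulVec_injective_of_isUnit ((isUnit_iff_isUnit_det _).2 hZ1) (hz'r.trans hzr.symm)]
    rfl
  have hrept : Sum.elim (X' t) (s' t) = Φ t 0 *ᵥ z + y₀ t := hz' ▸ hrep ht
  exact Sum.elim_eq_iff.1 (hrept.trans (Sum.elim_comp_inl_inr _).symm)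

/-- If `det Z₁ ≠ 0`, the MFG TPBV problem has exactly one solution
`(X̄, s)` on `[0, T]` (uniqueness understood on `[0,T]`). -/
theorem tpbv_unique_solution_of_det_Z1_ne_zero
    (n n1 : ℕ) (hn : 0 < n) (hn1 : 0 < n1) (T : ℝ) (hT : 0 < T)
    (A G Q Qf Γ Γf : Matrix (Fin n) (Fin n) ℝ)
    (B : Matrix (Fin n) (Fin n1) ℝ) (R : Matrix (Fin n1) (Fin n1) ℝ)
    (η ηf x0 : Fin n → ℝ)
    (hQ : Q.PosSemidef) (hQf : Qf.PosSemidef) (hR : R.PosDef)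
    (Λ1 : ℝ → Matrix (Fin n) (Fin n) ℝ)
    (hΛ1 : IsLam1Sol n n1 A Q Qf B R T Λ1)
    (Φ : ℝ → ℝ → Matrix (Fin n ⊕ Fin n) (Fin n ⊕ Fin n) ℝ)
    (hΦ : IsFundSol n n1 A G Q Γ B R T Λ1 Φ)
    (hdet : (Z1mat n Qf Γf T Φ).det ≠ 0) :
    ∃ X s : ℝ → Fin n → ℝ,
      IsTPBVSol n n1 A G Q Qf Γ Γf B R η ηf x0 T Λ1 X s ∧
      ∀ X' s' : ℝ → Fin n → ℝ,
        IsTPBVSol n n1 A G Q Qf Γ Γf B R η ηf x0 T Λ1 X' s' →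
        ∀ t ∈ Set.Icc (0:ℝ) T, X' t = X t ∧ s' t = s t :=
  tpbv_unique_solution_of_det_Z1_ne_zero_general n n1 T hT A G Q Qf Γ Γf B R η ηf x0 Λ1 hΛ1 Φ hΦ
    hdet
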